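/- arXiv:1809.07481 — 2 statements merged into one kernel-verified Lean document; each statement's English description precedes it below -/
import Mathlib

section
/- Let S be a subset of R^2, let s, t, a be points of S, and let B, B' be subsets of S. Assume: (i) every path in S from s to t meets B and also meets B'; (ii) for all p in B and q in B', d_S(p,q) = d_S(p,a) + d_S(a,q). Then d_S(s,t) = d_S(s,a) + d_S(a,t). -/
open Set

noncomputable section

/-- A path in `S` from `p` to `q`: continuous on `[0,1]`, with the prescribed endpoints,
and staying in `S` on `[0,1]`. The plane carries the `L1` metric via `WithLp 1 (ℝ × ℝ)`. -/
def IsPathIn (S : Set (WithLp 1 (ℝ × ℝ))) (p q : WithLp 1 (ℝ × ℝ))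
    (g : ℝ → WithLp 1 (ℝ × ℝ)) : Prop :=
  ContinuousOn g (Icc 0 1) ∧ g 0 = p ∧ g 1 = q ∧ ∀ x ∈ Icc (0:ℝ) 1, g x ∈ S

/-- The intrinsic `L1` distance in `S`: the infimum of the `L1` lengths (total variations)
of all paths in `S` from `p` to `q` (infinity if there is no such path). -/
def dS (S : Set (WithLp 1 (ℝ × ℝ))) (p q : WithLp 1 (ℝ × ℝ)) : ENNReal :=
  ⨅ (g : ℝ → WithLp 1 (ℝ × ℝ)) (_ : IsPathIn S p q g), eVariationOn g (Icc 0 1)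

/-!
Given a path from `s` to `t` in `S`, pick parameters where it meets `B` and `B'`, at points
`p ∈ B` and `q ∈ B'`. Cutting the path there bounds its length below by
`d_S(s, p) + d_S(p, q) + d_S(q, t)` (or the same with `p` and `q` swapped, if it meets `B'`
first), and the anchor identity `d_S(p, q) = d_S(p, a) + d_S(a, q)` together with the triangle
inequality turns this into `d_S(s, a) + d_S(a, t)`. The reverse inequality is the triangle
inequality for `d_S`, which comes from concatenating paths.
-/

section PathTrans

variable {E : Type*} {g h : ℝ → E}

def pathTrans (g h : ℝ → E) (x : ℝ) : E :=
  if x ≤ 2⁻¹ then g (2 * x) else h (2 * x - 1)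

theorem mapsTo_two_mul_Icc : MapsTo (fun x : ℝ => 2 * x) (Icc 0 2⁻¹) (Icc 0 1) :=
  fun _ hx => ⟨by linarith [hx.1], by linarith [hx.2]⟩

theorem mapsTo_two_mul_sub_one_Icc : MapsTo (fun x : ℝ => 2 * x - 1) (Icc 2⁻¹ 1) (Icc 0 1) :=
  fun _ hx => ⟨by linarith [hx.1], by linarith [hx.2]⟩

theorem pathTrans_eqOn_left : EqOn (pathTrans g h) (fun x => g (2 * x)) (Iic 2⁻¹) :=
  fun _ hx => if_pos hx

theorem pathTrans_eqOn_right (hgh : g 1 = h 0) :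
    EqOn (pathTrans g h) (fun x => h (2 * x - 1)) (Ici 2⁻¹) := by
  intro x hx
  rcases (mem_Ici.1 hx).eq_or_lt with rfl | hlt
  · norm_num [pathTrans, hgh]
  · exact if_neg (not_le.2 hlt)

theorem continuousOn_pathTrans [TopologicalSpace E] (hg : ContinuousOn g (Icc 0 1))
    (hh : ContinuousOn h (Icc 0 1)) (hgh : g 1 = h 0) :
    ContinuousOn (pathTrans g h) (Icc 0 1) := by
  rw [← Icc_union_Icc_eq_Icc (by norm_num : (0 : ℝ) ≤ 2⁻¹) (by norm_num : (2⁻¹ : ℝ) ≤ 1)]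
  refine ContinuousOn.union_of_isClosed ?_ ?_ isClosed_Icc isClosed_Icc
  · exact (hg.comp (by fun_prop) mapsTo_two_mul_Icc).congr
      (pathTrans_eqOn_left.mono Icc_subset_Iic_self)
  · exact (hh.comp (by fun_prop) mapsTo_two_mul_sub_one_Icc).congr
      ((pathTrans_eqOn_right hgh).mono Icc_subset_Ici_self)

theorem eVariationOn_pathTrans_le [PseudoEMetricSpace E] (hgh : g 1 = h 0) :
    eVariationOn (pathTrans g h) (Icc 0 1) ≤
      eVariationOn g (Icc 0 1) + eVariationOn h (Icc 0 1) := by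
  have hsplit := eVariationOn.Icc_add_Icc (pathTrans g h) (s := univ)
    (by norm_num : (0 : ℝ) ≤ 2⁻¹) (by norm_num : (2⁻¹ : ℝ) ≤ 1) (mem_univ _)
  simp only [univ_inter] at hsplit
  rw [← hsplit]
  gcongr
  · rw [eVariationOn.eq_of_eqOn (pathTrans_eqOn_left.mono Icc_subset_Iic_self)]
    exact eVariationOn.comp_le_of_monotoneOn g _
      (fun _ _ _ _ hxy => by linarith) mapsTo_two_mul_Icc
  · rw [eVariationOn.eq_of_eqOn ((pathTrans_eqOn_right hgh).mono Icc_subset_Ici_self)]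
    exact eVariationOn.comp_le_of_monotoneOn h _
      (fun _ _ _ _ hxy => by linarith) mapsTo_two_mul_sub_one_Icc

end PathTrans

local notation "ℝ²₁" => WithLp 1 (ℝ × ℝ)

variable {S : Set ℝ²₁} {p q r : ℝ²₁} {g h : ℝ → ℝ²₁}

namespace IsPathIn

theorem comp (hg : IsPathIn S p q g) {φ : ℝ → ℝ} (hφ : Continuous φ)
    (hmaps : MapsTo φ (Icc 0 1) (Icc 0 1)) : IsPathIn S (g (φ 0)) (g (φ 1)) (g ∘ φ) :=
  ⟨hg.1.comp hφ.continuousOn hmaps, rfl, rfl, fun _ hx => hg.2.2.2 _ (hmaps hx)⟩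

theorem trans (hg : IsPathIn S p q g) (hh : IsPathIn S q r h) :
    IsPathIn S p r (pathTrans g h) := by
  have hgh : g 1 = h 0 := hg.2.2.1.trans hh.2.1.symm
  refine ⟨continuousOn_pathTrans hg.1 hh.1 hgh, ?_, ?_, ?_⟩
  · norm_num [pathTrans, hg.2.1]
  · rw [pathTrans_eqOn_right hgh (by norm_num : (1 : ℝ) ∈ Ici 2⁻¹)]
    norm_num [hh.2.2.1]
  · intro x hx
    rcases le_total x 2⁻¹ with hx' | hx'
    · rw [pathTrans_eqOn_left hx']
      exact hg.2.2.2 _ (mapsTo_two_mul_Icc ⟨hx.1, hx'⟩)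
    · rw [pathTrans_eqOn_right hgh hx']
      exact hh.2.2.2 _ (mapsTo_two_mul_sub_one_Icc ⟨hx', hx.2⟩)

end IsPathIn

theorem dS_le_eVariationOn (hg : IsPathIn S p q g) : dS S p q ≤ eVariationOn g (Icc 0 1) :=
  iInf₂_le g hg

theorem dS_le_eVariationOn_Icc (hg : IsPathIn S p q g) {α β : ℝ} (h0α : 0 ≤ α) (hαβ : α ≤ β)
    (hβ1 : β ≤ 1) : dS S (g α) (g β) ≤ eVariationOn g (Icc α β) := by
  set φ : ℝ → ℝ := fun x => α + x * (β - α)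
  have hmaps : MapsTo φ (Icc 0 1) (Icc α β) :=
    fun x hx => ⟨by nlinarith [hx.1], by nlinarith [hx.2]⟩
  have hpath := hg.comp (φ := φ) (by fun_prop) (hmaps.mono_right (Icc_subset_Icc h0α hβ1))
  rw [show φ 0 = α by simp [φ], show φ 1 = β by simp [φ]] at hpath
  exact (dS_le_eVariationOn hpath).trans
    (eVariationOn.comp_le_of_monotoneOn g φ (fun _ _ _ _ hxy => by simp only [φ]; nlinarith) hmaps)

theorem dS_comm (S : Set ℝ²₁) (p q : ℝ²₁) : dS S p q = dS S q p := by
  suffices key : ∀ p q, dS S q p ≤ dS S p q from le_antisymm (key q p) (key p q)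
  intro p q
  refine le_iInf₂ fun g hg => ?_
  have hmaps : MapsTo (fun x : ℝ => 1 - x) (Icc 0 1) (Icc 0 1) :=
    fun _ hx => ⟨by linarith [hx.2], by linarith [hx.1]⟩
  have hrev := hg.comp (by fun_prop) hmaps
  simp only [sub_zero, sub_self, hg.2.1, hg.2.2.1] at hrev
  exact (dS_le_eVariationOn hrev).trans
    (eVariationOn.comp_le_of_antitoneOn g _ (fun _ _ _ _ hxy => by linarith) hmaps)

theorem dS_triangle (S : Set ℝ²₁) (p q r : ℝ²₁) : dS S p r ≤ dS S p q + dS S q r :=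
  ENNReal.le_iInf₂_add_iInf₂ fun _ hg _ hh =>
    (dS_le_eVariationOn (hg.trans hh)).trans
      (eVariationOn_pathTrans_le (hg.2.2.1.trans hh.2.1.symm))

theorem dS_add_dS_add_dS_le_eVariationOn {s t : ℝ²₁} (hg : IsPathIn S s t g) {u v : ℝ}
    (h0u : 0 ≤ u) (huv : u ≤ v) (hv1 : v ≤ 1) :
    dS S s (g u) + dS S (g u) (g v) + dS S (g v) t ≤ eVariationOn g (Icc 0 1) := by
  have h1 := eVariationOn.Icc_add_Icc g (s := univ) h0u huv (mem_univ u)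
  have h2 := eVariationOn.Icc_add_Icc g (s := univ) (h0u.trans huv) hv1 (mem_univ v)
  simp only [univ_inter] at h1 h2
  rw [← h2, ← h1]
  gcongr
  · simpa only [hg.2.1] using dS_le_eVariationOn_Icc hg le_rfl h0u (huv.trans hv1)
  · exact dS_le_eVariationOn_Icc hg h0u huv hv1
  · simpa only [hg.2.2.1] using dS_le_eVariationOn_Icc hg (h0u.trans huv) hv1 le_rfl

theorem dS_add_dS_le_of_dS_eq_add {s t a : ℝ²₁} (hpq : dS S p q = dS S p a + dS S a q) :
    dS S s a + dS S a t ≤ dS S s p + dS S p q + dS S q t :=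
  calc dS S s a + dS S a t
      ≤ (dS S s p + dS S p a) + (dS S a q + dS S q t) :=
        add_le_add (dS_triangle S s p a) (dS_triangle S a q t)
    _ = dS S s p + dS S p q + dS S q t := by rw [hpq]; ring

theorem dS_through_anchor_general (S : Set (WithLp 1 (ℝ × ℝ))) (s t a : WithLp 1 (ℝ × ℝ))
    (B B' : Set (WithLp 1 (ℝ × ℝ)))
    (hsepB : ∀ g : ℝ → WithLp 1 (ℝ × ℝ), IsPathIn S s t g → ∃ c ∈ Icc (0:ℝ) 1, g c ∈ B)
    (hsepB' : ∀ g : ℝ → WithLp 1 (ℝ × ℝ), IsPathIn S s t g → ∃ c ∈ Icc (0:ℝ) 1, g c ∈ B')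
    (hanchor : ∀ p ∈ B, ∀ q ∈ B', dS S p q = dS S p a + dS S a q) :
    dS S s t = dS S s a + dS S a t := by
  refine le_antisymm (dS_triangle S s a t) (le_iInf₂ fun g hg => ?_)
  obtain ⟨c, hc, hcB⟩ := hsepB g hg
  obtain ⟨c', hc', hcB'⟩ := hsepB' g hg
  rcases le_total c c' with hcc' | hc'c
  · exact (dS_add_dS_le_of_dS_eq_add (hanchor _ hcB _ hcB')).trans
      (dS_add_dS_add_dS_le_eVariationOn hg hc.1 hcc' hc'.2)
  · have hanchor' : dS S (g c') (g c) = dS S (g c') a + dS S a (g c) := by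
      rw [dS_comm, hanchor _ hcB _ hcB', add_comm, dS_comm S a, dS_comm S (g c)]
    exact (dS_add_dS_le_of_dS_eq_add hanchor').trans
      (dS_add_dS_add_dS_le_eVariationOn hg hc'.1 hc'c hc.2)

theorem dS_through_anchor (S : Set (WithLp 1 (ℝ × ℝ))) (s t a : WithLp 1 (ℝ × ℝ))
    (hs : s ∈ S) (ht : t ∈ S) (ha : a ∈ S)
    (B B' : Set (WithLp 1 (ℝ × ℝ))) (hB : B ⊆ S) (hB' : B' ⊆ S)
    (hsepB : ∀ g : ℝ → WithLp 1 (ℝ × ℝ), IsPathIn S s t g → ∃ c ∈ Icc (0:ℝ) 1, g c ∈ B)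
    (hsepB' : ∀ g : ℝ → WithLp 1 (ℝ × ℝ), IsPathIn S s t g → ∃ c ∈ Icc (0:ℝ) 1, g c ∈ B')
    (hanchor : ∀ p ∈ B, ∀ q ∈ B', dS S p q = dS S p a + dS S a q) :
    dS S s t = dS S s a + dS S a t :=
  dS_through_anchor_general S s t a B B' hsepB hsepB' hanchor
end
end

section
/- Let a <= c <= d <= b be real numbers and y0 a real number. Let l : R -> R be continuous on [a,b], antitone (nonincreasing) on [a,c], equal to y0 at every point of [c,d], and monotone (nondecreasing) on [d,b]. Let u : R -> R satisfy l x <= u x for all x in [a,b], and let S = { (x,y) in R^2 : a <= x <= b and l x <= y <= u x }. Then for every point p = (px,py) in S and every qx in [c,d], setting q = (qx, y0), one has d_S(p,q) = ||p - q||_1. -/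
open Set

noncomputable section

/-!
Every path from `p` to `q` has `L1` length at least `‖p - q‖₁`, since the variation of a path
bounds the distance of its endpoints. Conversely, the canonical path drops vertically from `p` to
the bottom and then follows the bottom to `q`. As `l` is antitone on `[a, d]` and monotone on
`[c, b]`, it decreases along the way from `p.x` to the base point `q.x`, so both coordinates of the
canonical path are monotone, and in the `L1` metric such a staircase path has length exactly the
distance of its endpoints.
-/

section Variation

variable {α : Type*} [LinearOrder α] {E F : Type*} [SeminormedAddCommGroup E]
  [SeminormedAddCommGroup F]

theorem eVariationOn_le_fst_add_snd (g : α → WithLp 1 (E × F)) (s : Set α) :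
    eVariationOn g s ≤
      eVariationOn (fun t => (g t).fst) s + eVariationOn (fun t => (g t).snd) s := by
  refine iSup_le fun ⟨n, u, hu, us⟩ => ?_
  calc ∑ i ∈ Finset.range n, edist (g (u (i + 1))) (g (u i))
      = ∑ i ∈ Finset.range n, edist (g (u (i + 1))).fst (g (u i)).fst +
          ∑ i ∈ Finset.range n, edist (g (u (i + 1))).snd (g (u i)).snd := by
        simp only [WithLp.prod_edist_eq_of_L1, Finset.sum_add_distrib]
    _ ≤ _ := add_le_add (eVariationOn.sum_le hu us) (eVariationOn.sum_le hu us)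

theorem eVariationOn_Icc_eq_edist_of_fst_snd {g : α → WithLp 1 (E × F)} {s t : α}
    (hst : s ≤ t)
    (h₁ : eVariationOn (fun r => (g r).fst) (Icc s t) = edist (g s).fst (g t).fst)
    (h₂ : eVariationOn (fun r => (g r).snd) (Icc s t) = edist (g s).snd (g t).snd) :
    eVariationOn g (Icc s t) = edist (g s) (g t) :=
  le_antisymm
    ((eVariationOn_le_fst_add_snd g _).trans_eq (by rw [h₁, h₂, WithLp.prod_edist_eq_of_L1]))
    (eVariationOn.edist_le g (left_mem_Icc.2 hst) (right_mem_Icc.2 hst))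

theorem eVariationOn_neg (f : α → E) (s : Set α) :
    eVariationOn (fun x => -f x) s = eVariationOn f s := by
  simp only [eVariationOn, edist_neg_neg]

theorem MonotoneOn.eVariationOn_Icc_eq_edist {f : ℝ → ℝ} {s t : ℝ}
    (hf : MonotoneOn f (Icc s t)) (hst : s ≤ t) :
    eVariationOn f (Icc s t) = edist (f s) (f t) := by
  have hs := left_mem_Icc.2 hst
  have ht := right_mem_Icc.2 hst
  rw [← inter_self (Icc s t), hf.eVariationOn_eq hs ht, edist_dist, Real.dist_eq, abs_sub_comm,
    abs_of_nonneg (sub_nonneg.2 (hf hs ht hst))]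

theorem AntitoneOn.eVariationOn_Icc_eq_edist {f : ℝ → ℝ} {s t : ℝ}
    (hf : AntitoneOn f (Icc s t)) (hst : s ≤ t) :
    eVariationOn f (Icc s t) = edist (f s) (f t) := by
  simpa only [eVariationOn_neg, edist_neg_neg] using hf.neg.eVariationOn_Icc_eq_edist hst

end Variation

theorem edist_le_dS (S : Set (WithLp 1 (ℝ × ℝ))) (p q : WithLp 1 (ℝ × ℝ)) :
    edist p q ≤ dS S p q :=
  le_iInf₂ fun g hg => by
    simpa only [hg.2.1, hg.2.2.1] using
      eVariationOn.edist_le g (left_mem_Icc.2 zero_le_one) (right_mem_Icc.2 zero_le_one)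

theorem dS_eq_edist_of_isPathIn {S : Set (WithLp 1 (ℝ × ℝ))} {p q : WithLp 1 (ℝ × ℝ)}
    {g : ℝ → WithLp 1 (ℝ × ℝ)} (hg : IsPathIn S p q g)
    (hlen : eVariationOn g (Icc 0 1) ≤ edist p q) : dS S p q = edist p q :=
  le_antisymm ((iInf₂_le g hg).trans hlen) (edist_le_dS S p q)

def mountain (a b : ℝ) (l u : ℝ → ℝ) : Set (WithLp 1 (ℝ × ℝ)) :=
  {p | a ≤ p.ofLp.1 ∧ p.ofLp.1 ≤ b ∧ l p.ofLp.1 ≤ p.ofLp.2 ∧ p.ofLp.2 ≤ u p.ofLp.1}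

theorem antitoneOn_comp_segment {a b c d : ℝ} {l : ℝ → ℝ} (hl₁ : AntitoneOn l (Icc a d))
    (hl₂ : MonotoneOn l (Icc c b)) {z w : ℝ} (hz : z ∈ Icc a b) (hw : w ∈ Icc c d) :
    AntitoneOn (fun s => l (z + s * (w - z))) (Icc 0 1) := by
  rcases le_total z w with hzw | hwz
  · have hmaps : MapsTo (fun s => z + s * (w - z)) (Icc 0 1) (Icc a d) := fun s hs =>
      (convex_Icc a d).add_smul_sub_mem ⟨hz.1, hzw.trans hw.2⟩ ⟨hz.1.trans hzw, hw.2⟩ hs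
    exact hl₁.comp_MonotoneOn (fun s _ t _ hst => by nlinarith) hmaps
  · have hmaps : MapsTo (fun s => z + s * (w - z)) (Icc 0 1) (Icc c b) := fun s hs =>
      (convex_Icc c b).add_smul_sub_mem ⟨hw.1.trans hwz, hz.2⟩ ⟨hw.1, hwz.trans hz.2⟩ hs
    exact hl₂.comp_AntitoneOn (fun s _ t _ hst => by nlinarith) hmaps

section CanonicalPath

variable {l : ℝ → ℝ} {p q : WithLp 1 (ℝ × ℝ)}

def canonicalPathX (p q : WithLp 1 (ℝ × ℝ)) (t : ℝ) : ℝ :=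
  p.ofLp.1 + max (2 * t - 1) 0 * (q.ofLp.1 - p.ofLp.1)

/-- On `[0, 1/2]` the abscissa stays at `p.x` while the height descends linearly from `p.y`,
clipped from below at `l`; on `[1/2, 1]` the abscissa moves linearly to `q.x` and the height is
`l` itself, the linear term having dropped below `q.y`. -/
def canonicalPath (l : ℝ → ℝ) (p q : WithLp 1 (ℝ × ℝ)) (t : ℝ) :
    WithLp 1 (ℝ × ℝ) :=
  WithLp.toLp 1 (canonicalPathX p q t,
    max (l (canonicalPathX p q t)) (p.ofLp.2 - 2 * t * (p.ofLp.2 - q.ofLp.2)))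

theorem mapsTo_max_two_mul_sub_one :
    MapsTo (fun t : ℝ => max (2 * t - 1) 0) (Icc 0 1) (Icc 0 1) :=
  fun _ ht => ⟨le_max_right _ _, max_le (by linarith [ht.2]) zero_le_one⟩

theorem monotone_max_two_mul_sub_one : Monotone (fun t : ℝ => max (2 * t - 1) 0) :=
  fun _ _ hst => max_le_max_right 0 (by linarith)

theorem canonicalPathX_of_le_half {t : ℝ} (ht : t ≤ 1 / 2) :
    canonicalPathX p q t = p.ofLp.1 := by
  simp [canonicalPathX, max_eq_right (by linarith : 2 * t - 1 ≤ 0)]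

theorem canonicalPathX_one : canonicalPathX p q 1 = q.ofLp.1 := by
  norm_num [canonicalPathX]

theorem canonicalPathX_mem {a b t : ℝ} (hp : p.ofLp.1 ∈ Icc a b) (hq : q.ofLp.1 ∈ Icc a b)
    (ht : t ∈ Icc 0 1) : canonicalPathX p q t ∈ Icc a b :=
  (convex_Icc a b).add_smul_sub_mem hp hq (mapsTo_max_two_mul_sub_one ht)

theorem monotone_or_antitone_canonicalPathX :
    Monotone (canonicalPathX p q) ∨ Antitone (canonicalPathX p q) := by
  rcases le_total p.ofLp.1 q.ofLp.1 with h | h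
  · exact .inl fun s t hst => by
      have := monotone_max_two_mul_sub_one hst
      dsimp only [canonicalPathX] at this ⊢
      nlinarith
  · exact .inr fun s t hst => by
      have := monotone_max_two_mul_sub_one hst
      dsimp only [canonicalPathX] at this ⊢
      nlinarith

theorem canonicalPath_zero (hp : l p.ofLp.1 ≤ p.ofLp.2) : canonicalPath l p q 0 = p := by
  rw [canonicalPath, canonicalPathX_of_le_half (by norm_num)]
  congr 1
  ext
  · rfl
  · simp only [mul_zero, zero_mul, sub_zero]
    exact max_eq_right hp

theorem canonicalPath_one (hq : l q.ofLp.1 = q.ofLp.2) (hqp : q.ofLp.2 ≤ p.ofLp.2) :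
    canonicalPath l p q 1 = q := by
  rw [canonicalPath, canonicalPathX_one, hq]
  congr 1
  ext
  · rfl
  · exact max_eq_left (by linarith)

theorem continuousOn_canonicalPath {a b : ℝ} (hl : ContinuousOn l (Icc a b))
    (hp : p.ofLp.1 ∈ Icc a b) (hq : q.ofLp.1 ∈ Icc a b) :
    ContinuousOn (canonicalPath l p q) (Icc 0 1) := by
  have hX : Continuous (canonicalPathX p q) := by unfold canonicalPathX; fun_prop
  refine (WithLp.prod_continuous_toLp 1 ℝ ℝ).comp_continuousOn
    (hX.continuousOn.prodMk (ContinuousOn.sup ?_ (by fun_prop)))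
  exact hl.comp hX.continuousOn fun t ht => canonicalPathX_mem hp hq ht

theorem antitoneOn_canonicalPath_snd
    (hl : AntitoneOn (fun s => l (p.ofLp.1 + s * (q.ofLp.1 - p.ofLp.1))) (Icc 0 1))
    (hqp : q.ofLp.2 ≤ p.ofLp.2) :
    AntitoneOn (fun t => (canonicalPath l p q t).ofLp.2) (Icc 0 1) :=
  AntitoneOn.max
    (hl.comp_MonotoneOn (monotone_max_two_mul_sub_one.monotoneOn _) mapsTo_max_two_mul_sub_one)
    (fun s _ t _ hst => by nlinarith)

theorem eVariationOn_canonicalPath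
    (hl : AntitoneOn (fun s => l (p.ofLp.1 + s * (q.ofLp.1 - p.ofLp.1))) (Icc 0 1))
    (hp : l p.ofLp.1 ≤ p.ofLp.2) (hq : l q.ofLp.1 = q.ofLp.2) (hqp : q.ofLp.2 ≤ p.ofLp.2) :
    eVariationOn (canonicalPath l p q) (Icc 0 1) = edist p q := by
  have hX : eVariationOn (canonicalPathX p q) (Icc 0 1) =
      edist (canonicalPathX p q 0) (canonicalPathX p q 1) := by
    rcases monotone_or_antitone_canonicalPathX (p := p) (q := q) with h | h
    exacts [(h.monotoneOn _).eVariationOn_Icc_eq_edist zero_le_one,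
      (h.antitoneOn _).eVariationOn_Icc_eq_edist zero_le_one]
  have := eVariationOn_Icc_eq_edist_of_fst_snd zero_le_one hX
    ((antitoneOn_canonicalPath_snd hl hqp).eVariationOn_Icc_eq_edist zero_le_one)
  rwa [canonicalPath_zero hp, canonicalPath_one hq hqp] at this

theorem isPathIn_canonicalPath {a b : ℝ} {u : ℝ → ℝ} (hl : ContinuousOn l (Icc a b))
    (hlu : ∀ x ∈ Icc a b, l x ≤ u x) (hbot : ∀ x ∈ Icc a b, q.ofLp.2 ≤ l x)
    (hp : p ∈ mountain a b l u) (hq : q.ofLp.1 ∈ Icc a b) (hlq : l q.ofLp.1 = q.ofLp.2) :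
    IsPathIn (mountain a b l u) p q (canonicalPath l p q) := by
  obtain ⟨hpa, hpb, hlp, hpu⟩ := hp
  have hqp : q.ofLp.2 ≤ p.ofLp.2 := (hbot _ ⟨hpa, hpb⟩).trans hlp
  refine ⟨continuousOn_canonicalPath hl ⟨hpa, hpb⟩ hq, canonicalPath_zero hlp,
    canonicalPath_one hlq hqp, fun t ht => ?_⟩
  have hX := canonicalPathX_mem ⟨hpa, hpb⟩ hq ht
  refine ⟨hX.1, hX.2, le_max_left _ _, max_le (hlu _ hX) ?_⟩
  change p.ofLp.2 - 2 * t * (p.ofLp.2 - q.ofLp.2) ≤ u (canonicalPathX p q t)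
  rcases le_total t (1 / 2) with h | h
  · rw [canonicalPathX_of_le_half h]
    nlinarith [ht.1]
  · nlinarith [hbot _ hX, hlu _ hX]

end CanonicalPath

theorem mountain_canonical_path_shortest (a b c d y0 : ℝ)
    (hac : a ≤ c) (hcd : c ≤ d) (hdb : d ≤ b)
    (l u : ℝ → ℝ) (hlcont : ContinuousOn l (Icc a b))
    (hldec : AntitoneOn l (Icc a c)) (hlbase : ∀ x ∈ Icc c d, l x = y0)
    (hlinc : MonotoneOn l (Icc d b)) (hlu : ∀ x ∈ Icc a b, l x ≤ u x)
    (S : Set (WithLp 1 (ℝ × ℝ)))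
    (hS : S = {p : WithLp 1 (ℝ × ℝ) | a ≤ p.ofLp.1 ∧ p.ofLp.1 ≤ b ∧ l p.ofLp.1 ≤ p.ofLp.2 ∧ p.ofLp.2 ≤ u p.ofLp.1})
    (p : WithLp 1 (ℝ × ℝ)) (hp : p ∈ S) (qx : ℝ) (hqx : qx ∈ Icc c d) :
    dS S p ((WithLp.equiv 1 (ℝ × ℝ)).symm (qx, y0)) =
      (‖p - (WithLp.equiv 1 (ℝ × ℝ)).symm (qx, y0)‖₊ : ENNReal) := by
  change S = mountain a b l u at hS
  subst hS
  set q : WithLp 1 (ℝ × ℝ) := (WithLp.equiv 1 (ℝ × ℝ)).symm (qx, y0)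
  have hbase_anti : AntitoneOn l (Icc c d) := fun s hs t ht _ => by
    rw [hlbase s hs, hlbase t ht]
  have hbase_mono : MonotoneOn l (Icc c d) := fun s hs t ht _ => by
    rw [hlbase s hs, hlbase t ht]
  have hl₁ : AntitoneOn l (Icc a d) := by
    simpa only [Icc_union_Icc_eq_Icc hac hcd] using
      hldec.union_right hbase_anti (isGreatest_Icc hac) (isLeast_Icc hcd)
  have hl₂ : MonotoneOn l (Icc c b) := by
    simpa only [Icc_union_Icc_eq_Icc hcd hdb] using
      hbase_mono.union_right hlinc (isGreatest_Icc hcd) (isLeast_Icc hdb)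
  have hseg : ∀ z ∈ Icc a b, AntitoneOn (fun s => l (z + s * (qx - z))) (Icc 0 1) :=
    fun z hz => antitoneOn_comp_segment hl₁ hl₂ hz hqx
  have hbot : ∀ z ∈ Icc a b, y0 ≤ l z := fun z hz => by
    simpa [hlbase qx hqx] using hseg z hz (left_mem_Icc.2 zero_le_one) (right_mem_Icc.2 zero_le_one)
      zero_le_one
  have hpab : p.ofLp.1 ∈ Icc a b := ⟨hp.1, hp.2.1⟩
  have hpath := isPathIn_canonicalPath (q := q) hlcont hlu hbot hp
    ⟨hac.trans hqx.1, hqx.2.trans hdb⟩ (hlbase qx hqx)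
  rw [← enorm_eq_nnnorm, ← edist_eq_enorm_sub]
  exact dS_eq_edist_of_isPathIn hpath (eVariationOn_canonicalPath (hseg _ hpab) hp.2.2.1
    (hlbase qx hqx) ((hbot _ hpab).trans hp.2.2.1)).le
end
end
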